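/- With σ = -i(M+1), the equation Q_σ(Σ_{k=0}^{M} α_k δ^{(k)}(v)) = 0 (where Q_σ is as above, with spherical Laplacian eigenvalue λ) is equivalent to the linear system: for each k = 0,...,M, (k-1-M)α_{k-1} + (λ + M + 2 + 2(k+1)(k-M-1))α_k + (k+1)(M+2+(k+2)(k-M-1))α_{k+1} = 0, with α_{-1} = α_{M+1} = 0; i.e., equivalent to (λI - A_M)α = 0 for the tridiagonal matrix A_M. -/

import Mathlib

open Finset

/-- Formal adjoint of the differential operator
`Q_σ = -(iσ+1)∂_v - v∂_v² + 2(iσ+2)v∂_v + 2v²∂_v² + (iσ+1) + λ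
        - (iσ+3)v²∂_v - v³∂_v² - (iσ+1)v`,
written as `Q_σ = c₂(v)∂_v² + c₁(v)∂_v + c₀(v)` with
`c₂(v) = -v + 2v² - v³`, `c₁(v) = -(iσ+1) + 2(iσ+2)v - (iσ+3)v²`,
`c₀(v) = (iσ+1) + λ - (iσ+1)v`, acting on a test function `φ` by
`Qᵗφ = (c₂φ)'' - (c₁φ)' + c₀φ`, so that `⟨Q_σ u, φ⟩ = ⟨u, Qᵗφ⟩`. -/
noncomputable def Qt (σ : ℂ) (lam : ℝ) (φ : ℝ → ℂ) : ℝ → ℂ := fun v =>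
  deriv (deriv (fun w : ℝ => (-(w:ℂ) + 2*(w:ℂ)^2 - (w:ℂ)^3) * φ w)) v
  - deriv (fun w : ℝ =>
      (-(Complex.I*σ+1) + 2*(Complex.I*σ+2)*(w:ℂ) - (Complex.I*σ+3)*(w:ℂ)^2) * φ w) v
  + ((Complex.I*σ+1) + (lam:ℂ) - (Complex.I*σ+1)*(v:ℂ)) * φ v

noncomputable def Pc (c0 c1 c2 c3 : ℂ) : ℝ → ℂ := fun w => c0 + c1*w + c2*(w:ℂ)^2 + c3*(w:ℂ)^3

lemma hasDerivAt_monomial (n : ℕ) (v : ℝ) :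
    HasDerivAt (fun w : ℝ => (w:ℂ)^n) ((n:ℂ)*(v:ℂ)^(n-1)) v :=
  (hasDerivAt_pow n (v:ℂ)).comp_ofReal

lemma hasDerivAt_Pc (c0 c1 c2 c3 : ℂ) (v : ℝ) :
    HasDerivAt (Pc c0 c1 c2 c3) (Pc c1 (2*c2) (3*c3) 0 v) v := by
  have hv : HasDerivAt (fun w:ℝ => (w:ℂ)) 1 v := by simpa using hasDerivAt_monomial 1 v
  have h1 : HasDerivAt (fun w:ℝ => c0 + c1*(w:ℂ)) (c1*1) v := (hv.const_mul c1).const_add c0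
  have h2 : HasDerivAt (fun w:ℝ => c2*(w:ℂ)^2) (c2*(2*(v:ℂ))) v :=
    ((hasDerivAt_monomial 2 v).const_mul c2).congr_deriv (by norm_num)
  have h3 : HasDerivAt (fun w:ℝ => c3*(w:ℂ)^3) (c3*(3*(v:ℂ)^2)) v :=
    ((hasDerivAt_monomial 3 v).const_mul c3).congr_deriv (by norm_num)
  have h := (h1.add h2).add h3
  have e : c1*1 + c2*(2*(v:ℂ)) + c3*(3*(v:ℂ)^2) = Pc c1 (2*c2) (3*c3) 0 v := by
    simp [Pc]; ring
  rw [e] at h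
  exact h

lemma contDiff_ofReal' : ContDiff ℝ (⊤:ℕ∞) (fun v:ℝ => (v:ℂ)) := Complex.ofRealCLM.contDiff

lemma contDiff_monomial (n : ℕ) : ContDiff ℝ (⊤:ℕ∞) (fun v:ℝ => (v:ℂ)^n) :=
  contDiff_ofReal'.pow n

lemma contDiff_Pc (c0 c1 c2 c3 : ℂ) : ContDiff ℝ (⊤:ℕ∞) (Pc c0 c1 c2 c3) :=
  ((contDiff_const.add (contDiff_const.mul contDiff_ofReal')).add
    (contDiff_const.mul (contDiff_monomial 2))).add (contDiff_const.mul (contDiff_monomial 3))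

lemma diffat {φ : ℝ → ℂ} (hφ : ContDiff ℝ (⊤:ℕ∞) φ) (v : ℝ) : HasDerivAt φ (deriv φ v) v :=
  (hφ.differentiable (by simp) v).hasDerivAt

lemma deriv_smooth {φ : ℝ → ℂ} (hφ : ContDiff ℝ (⊤:ℕ∞) φ) : ContDiff ℝ (⊤:ℕ∞) (deriv φ) :=
  (contDiff_infty_iff_deriv.mp hφ).2

lemma hasDerivAt_Pc_mul (c0 c1 c2 c3 : ℂ) {φ : ℝ → ℂ} (hφ : ContDiff ℝ (⊤:ℕ∞) φ) (v : ℝ) :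
    HasDerivAt (fun w : ℝ => Pc c0 c1 c2 c3 w * φ w)
      (Pc c1 (2*c2) (3*c3) 0 v * φ v + Pc c0 c1 c2 c3 v * deriv φ v) v :=
  (hasDerivAt_Pc c0 c1 c2 c3 v).mul (diffat hφ v)

lemma deriv_Pc_mul (c0 c1 c2 c3 : ℂ) {φ : ℝ → ℂ} (hφ : ContDiff ℝ (⊤:ℕ∞) φ) :
    deriv (fun w : ℝ => Pc c0 c1 c2 c3 w * φ w)
      = fun v => Pc c1 (2*c2) (3*c3) 0 v * φ v + Pc c0 c1 c2 c3 v * deriv φ v :=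
  funext fun v => (hasDerivAt_Pc_mul c0 c1 c2 c3 hφ v).deriv

lemma deriv2_Pc_mul (c0 c1 c2 c3 : ℂ) {φ : ℝ → ℂ} (hφ : ContDiff ℝ (⊤:ℕ∞) φ) (v : ℝ) :
    deriv (deriv (fun w : ℝ => Pc c0 c1 c2 c3 w * φ w)) v
      = Pc (2*c2) (2*(3*c3)) 0 0 v * φ v + 2 * Pc c1 (2*c2) (3*c3) 0 v * deriv φ v
        + Pc c0 c1 c2 c3 v * deriv (deriv φ) v := by
  rw [deriv_Pc_mul c0 c1 c2 c3 hφ]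
  have h1 := hasDerivAt_Pc_mul c1 (2*c2) (3*c3) 0 hφ v
  have h2 := hasDerivAt_Pc_mul c0 c1 c2 c3 (deriv_smooth hφ) v
  rw [(h1.fun_add h2).deriv]
  simp [Pc]; ring

lemma Qt_expand (M : ℕ) (lam : ℝ) {φ : ℝ → ℂ} (hφ : ContDiff ℝ (⊤:ℕ∞) φ) (v : ℝ) :
    Qt (-Complex.I * ((M:ℂ)+1)) lam φ v
      = Pc 0 (-1) 2 (-1) v * deriv (deriv φ) v
        + Pc (M:ℂ) (2-2*(M:ℂ)) ((M:ℂ)-2) 0 v * deriv φ v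
        + Pc ((lam:ℂ)-(M:ℂ)) (M:ℂ) 0 0 v * φ v := by
  have hI : Complex.I * (-Complex.I * ((M:ℂ)+1)) = (M:ℂ)+1 := by
    rw [show Complex.I * (-Complex.I * ((M:ℂ)+1)) = -(Complex.I*Complex.I)*((M:ℂ)+1) by ring,
      Complex.I_mul_I]; ring
  have e2 : (fun w : ℝ => (-(w:ℂ) + 2*(w:ℂ)^2 - (w:ℂ)^3) * φ w)
      = fun w : ℝ => Pc 0 (-1) 2 (-1) w * φ w := by
    funext w; simp only [Pc]; ring
  have e1 : (fun w : ℝ =>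
      (-(Complex.I*(-Complex.I * ((M:ℂ)+1))+1) + 2*(Complex.I*(-Complex.I * ((M:ℂ)+1))+2)*(w:ℂ)
        - (Complex.I*(-Complex.I * ((M:ℂ)+1))+3)*(w:ℂ)^2) * φ w)
      = fun w : ℝ => Pc (-((M:ℂ)+2)) (2*((M:ℂ)+3)) (-((M:ℂ)+4)) 0 w * φ w := by
    funext w; rw [hI]; simp only [Pc]; ring
  unfold Qt
  rw [e2, e1, deriv2_Pc_mul 0 (-1) 2 (-1) hφ, deriv_Pc_mul _ _ _ _ hφ, hI]
  simp only [Pc]; ring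

lemma itd_add {f g : ℝ → ℂ} (hf : ContDiff ℝ (⊤:ℕ∞) f) (hg : ContDiff ℝ (⊤:ℕ∞) g)
    (n : ℕ) (x : ℝ) :
    iteratedDeriv n (fun v => f v + g v) x = iteratedDeriv n f x + iteratedDeriv n g x := by
  simp only [← iteratedDerivWithin_univ]
  exact iteratedDerivWithin_add (Set.mem_univ x) uniqueDiffOn_univ
    (hf.of_le (by exact_mod_cast le_top)).contDiffWithinAt (hg.of_le (by exact_mod_cast le_top)).contDiffWithinAt

lemma itd_cmul (c : ℂ) {f : ℝ → ℂ} (hf : ContDiff ℝ (⊤:ℕ∞) f) (n : ℕ) (x : ℝ) :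
    iteratedDeriv n (fun v => c * f v) x = c * iteratedDeriv n f x := by
  simp only [← iteratedDerivWithin_univ]
  have := iteratedDerivWithin_const_smul (F := ℂ) (n := n) (Set.mem_univ x) uniqueDiffOn_univ c
    (hf.of_le (by exact_mod_cast le_top)).contDiffWithinAt
  simpa [smul_eq_mul] using this

lemma itd_const (n : ℕ) (c : ℂ) (x : ℝ) :
    iteratedDeriv n (fun _ : ℝ => c) x = if n = 0 then c else 0 := by
  induction n generalizing c with
  | zero => simp
  | succ n ih =>
    rw [iteratedDeriv_succ']
    have : deriv (fun _ : ℝ => c) = fun _ : ℝ => (0:ℂ) := funext fun y => deriv_const y c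
    rw [this, ih]
    simp

lemma itd_monomial {ψ : ℝ → ℂ} (hψ : ContDiff ℝ (⊤:ℕ∞) ψ) (m k : ℕ) :
    iteratedDeriv k (fun v : ℝ => (v:ℂ)^m * ψ v) 0
      = (k.descFactorial m : ℂ) * iteratedDeriv (k - m) ψ 0 := by
  induction k generalizing m ψ with
  | zero =>
    rcases m with - | m
    · simp
    · simp [Nat.zero_descFactorial_succ]
  | succ k ih =>
    rw [iteratedDeriv_succ']
    rcases m with - | m
    · have h0 : (fun v : ℝ => (v:ℂ)^0 * ψ v) = ψ := by funext v; simp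
      rw [h0, ← iteratedDeriv_succ']
      simp
    · have hder : deriv (fun v : ℝ => (v:ℂ)^(m+1) * ψ v)
          = fun v : ℝ => ((m:ℂ)+1) * ((v:ℂ)^m * ψ v) + (v:ℂ)^(m+1) * deriv ψ v := by
        funext v
        have h := ((hasDerivAt_monomial (m+1) v).fun_mul (diffat hψ v)).deriv
        rw [h]; push_cast; ring
      rw [hder]
      have hs1 : ContDiff ℝ (⊤:ℕ∞) (fun v : ℝ => ((m:ℂ)+1) * ((v:ℂ)^m * ψ v)) :=
        contDiff_const.mul ((contDiff_monomial m).mul hψ)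
      have hs2 : ContDiff ℝ (⊤:ℕ∞) (fun v : ℝ => (v:ℂ)^(m+1) * deriv ψ v) :=
        (contDiff_monomial (m+1)).mul (deriv_smooth hψ)
      rw [itd_add hs1 hs2, itd_cmul _ ((contDiff_monomial m).mul hψ), ih hψ m,
        ih (deriv_smooth hψ) (m+1)]
      rw [Nat.succ_sub_succ, Nat.succ_descFactorial_succ, Nat.descFactorial_succ]
      rcases lt_trichotomy k m with h | h | h
      · have h1 : k.descFactorial m = 0 := Nat.descFactorial_eq_zero_iff_lt.mpr h
        have h2 : k.descFactorial (m+1) = 0 :=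
          Nat.descFactorial_eq_zero_iff_lt.mpr (by omega)
        rw [Nat.descFactorial_succ] at h2
        simp [h1, h2]
      · subst h
        simp [mul_assoc]
      · have hidx : k - (m+1) + 1 = k - m := by omega
        rw [← iteratedDeriv_succ', hidx]
        have : ((k - m : ℕ) : ℂ) = (k:ℂ) - (m:ℂ) := by
          push_cast [Nat.cast_sub (le_of_lt h)]; ring
        push_cast [this]
        ring

lemma itd_Pc_mul (c0 c1 c2 c3 : ℂ) {ψ : ℝ → ℂ} (hψ : ContDiff ℝ (⊤:ℕ∞) ψ) (k : ℕ) :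
    iteratedDeriv k (fun v : ℝ => Pc c0 c1 c2 c3 v * ψ v) 0
      = c0 * iteratedDeriv k ψ 0
        + c1 * ((k.descFactorial 1 : ℂ) * iteratedDeriv (k-1) ψ 0)
        + c2 * ((k.descFactorial 2 : ℂ) * iteratedDeriv (k-2) ψ 0)
        + c3 * ((k.descFactorial 3 : ℂ) * iteratedDeriv (k-3) ψ 0) := by
  have t0 : ContDiff ℝ (⊤:ℕ∞) (fun v : ℝ => (v:ℂ)^0 * ψ v) := (contDiff_monomial 0).mul hψ
  have t1 : ContDiff ℝ (⊤:ℕ∞) (fun v : ℝ => (v:ℂ)^1 * ψ v) := (contDiff_monomial 1).mul hψ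
  have t2 : ContDiff ℝ (⊤:ℕ∞) (fun v : ℝ => (v:ℂ)^2 * ψ v) := (contDiff_monomial 2).mul hψ
  have t3 : ContDiff ℝ (⊤:ℕ∞) (fun v : ℝ => (v:ℂ)^3 * ψ v) := (contDiff_monomial 3).mul hψ
  have hfun : (fun v : ℝ => Pc c0 c1 c2 c3 v * ψ v)
      = fun v : ℝ => (c0 * ((v:ℂ)^0 * ψ v) + c1 * ((v:ℂ)^1 * ψ v))
          + (c2 * ((v:ℂ)^2 * ψ v) + c3 * ((v:ℂ)^3 * ψ v)) := by
    funext v; simp only [Pc]; ring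
  rw [hfun, itd_add ((contDiff_const.mul t0).add (contDiff_const.mul t1))
      ((contDiff_const.mul t2).add (contDiff_const.mul t3)),
    itd_add (contDiff_const.mul t0) (contDiff_const.mul t1),
    itd_add (contDiff_const.mul t2) (contDiff_const.mul t3),
    itd_cmul c0 t0, itd_cmul c1 t1, itd_cmul c2 t2, itd_cmul c3 t3,
    itd_monomial hψ 0 k, itd_monomial hψ 1 k, itd_monomial hψ 2 k, itd_monomial hψ 3 k]
  simp only [Nat.descFactorial_zero, Nat.cast_one, one_mul, Nat.sub_zero]
  ring

lemma stepA (M : ℕ) (lam : ℝ) {φ : ℝ → ℂ} (hφ : ContDiff ℝ (⊤:ℕ∞) φ) (k : ℕ) :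
    iteratedDeriv k (Qt (-Complex.I * ((M:ℂ)+1)) lam φ) 0
      = ((M:ℂ) - (k:ℂ)) * iteratedDeriv (k+1) φ 0
        + ((lam:ℂ) - (M:ℂ) + (2-2*(M:ℂ))*(k:ℂ) + 2*(k:ℂ)*((k:ℂ)-1)) * iteratedDeriv k φ 0
        + (if k = 0 then 0 else
            ((M:ℂ)*(k:ℂ) + ((M:ℂ)-2)*((k:ℂ)*((k:ℂ)-1)) - (k:ℂ)*((k:ℂ)-1)*((k:ℂ)-2))
              * iteratedDeriv (k-1) φ 0) := by
  have hφ1 := deriv_smooth hφ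
  have hφ2 := deriv_smooth hφ1
  have hfun : Qt (-Complex.I * ((M:ℂ)+1)) lam φ
      = fun v : ℝ => (Pc 0 (-1) 2 (-1) v * deriv (deriv φ) v
          + Pc (M:ℂ) (2-2*(M:ℂ)) ((M:ℂ)-2) 0 v * deriv φ v)
          + Pc ((lam:ℂ)-(M:ℂ)) (M:ℂ) 0 0 v * φ v := by
    funext v; rw [Qt_expand M lam hφ v]
  rw [hfun, itd_add (((contDiff_Pc 0 (-1) 2 (-1)).mul hφ2).add
      ((contDiff_Pc (M:ℂ) (2-2*(M:ℂ)) ((M:ℂ)-2) 0).mul hφ1))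
      ((contDiff_Pc ((lam:ℂ)-(M:ℂ)) (M:ℂ) 0 0).mul hφ),
    itd_add ((contDiff_Pc 0 (-1) 2 (-1)).mul hφ2)
      ((contDiff_Pc (M:ℂ) (2-2*(M:ℂ)) ((M:ℂ)-2) 0).mul hφ1),
    itd_Pc_mul _ _ _ _ hφ2 k, itd_Pc_mul _ _ _ _ hφ1 k, itd_Pc_mul _ _ _ _ hφ k]
  simp only [← iteratedDeriv_succ']
  rcases k with - | - | - | n
  · norm_num [Nat.descFactorial]
  · norm_num [Nat.descFactorial]; ring
  · norm_num [Nat.descFactorial]; ring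
  · norm_num [Nat.descFactorial]
    simp only [show n+1+1+1-2+1+1 = n+1+1+1 by omega, show n+1+1+1-3+1+1 = n+1+1 by omega,
      show n+1+1+1-2+1 = n+1+1 by omega]
    ring

lemma master (M : ℕ) (lam : ℝ) (α : ℕ → ℂ) {φ : ℝ → ℂ} (hφ : ContDiff ℝ (⊤:ℕ∞) φ) :
    ∑ k ∈ Finset.range (M+1),
        α k * ((-1:ℂ)^k * iteratedDeriv k (Qt (-Complex.I * ((M:ℂ)+1)) lam φ) 0)
    = ∑ j ∈ Finset.range (M+1), (-1:ℂ)^j *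
        (((j:ℂ) - 1 - (M:ℂ)) * (if j = 0 then 0 else α (j-1))
         + ((lam:ℂ) + (M:ℂ) + 2 + 2*((j:ℂ)+1)*((j:ℂ)-(M:ℂ)-1)) * α j
         + ((j:ℂ)+1) * ((M:ℂ)+2 + ((j:ℂ)+2)*((j:ℂ)-(M:ℂ)-1)) * (if j = M then 0 else α (j+1)))
        * iteratedDeriv j φ 0 := by
  have h1 : ∀ k ∈ Finset.range (M+1),
      α k * ((-1:ℂ)^k * iteratedDeriv k (Qt (-Complex.I * ((M:ℂ)+1)) lam φ) 0)
        = α k * (-1:ℂ)^k * ((M:ℂ)-(k:ℂ)) * iteratedDeriv (k+1) φ 0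
          + α k * (-1:ℂ)^k * ((lam:ℂ) - (M:ℂ) + (2-2*(M:ℂ))*(k:ℂ) + 2*(k:ℂ)*((k:ℂ)-1))
              * iteratedDeriv k φ 0
          + (if k = 0 then 0 else α k * (-1:ℂ)^k *
              ((M:ℂ)*(k:ℂ) + ((M:ℂ)-2)*((k:ℂ)*((k:ℂ)-1)) - (k:ℂ)*((k:ℂ)-1)*((k:ℂ)-2))
              * iteratedDeriv (k-1) φ 0) := by
    intro k _
    rw [stepA M lam hφ k]
    split_ifs with h
    · ring
    · ring
  rw [Finset.sum_congr rfl h1, Finset.sum_add_distrib, Finset.sum_add_distrib]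
  have e1 : (∑ k ∈ Finset.range (M+1),
        α k * (-1:ℂ)^k * ((M:ℂ)-(k:ℂ)) * iteratedDeriv (k+1) φ 0)
      = ∑ j ∈ Finset.range (M+1), (-1:ℂ)^j *
          (((j:ℂ) - 1 - (M:ℂ)) * (if j = 0 then 0 else α (j-1))) * iteratedDeriv j φ 0 := by
    rw [Finset.sum_range_succ, Finset.sum_range_succ']
    rw [show α M * (-1:ℂ)^M * ((M:ℂ) - (M:ℂ)) * iteratedDeriv (M + 1) φ 0 = 0 by
        rw [sub_self]; ring, add_zero,
      show ((-1:ℂ)^0 * ((((0:ℕ):ℂ) - 1 - (M:ℂ)) * if (0:ℕ) = 0 then 0 else α (0-1))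
          * iteratedDeriv 0 φ 0) = 0 by simp, add_zero]
    refine Finset.sum_congr rfl fun k _ => ?_
    rw [if_neg k.succ_ne_zero, Nat.add_sub_cancel]
    push_cast [pow_succ]
    ring
  have e3 : (∑ k ∈ Finset.range (M+1), (if k = 0 then 0 else α k * (-1:ℂ)^k *
        ((M:ℂ)*(k:ℂ) + ((M:ℂ)-2)*((k:ℂ)*((k:ℂ)-1)) - (k:ℂ)*((k:ℂ)-1)*((k:ℂ)-2))
        * iteratedDeriv (k-1) φ 0))
      = ∑ j ∈ Finset.range (M+1), (-1:ℂ)^j *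
          (((j:ℂ)+1) * ((M:ℂ)+2 + ((j:ℂ)+2)*((j:ℂ)-(M:ℂ)-1)) * (if j = M then 0 else α (j+1)))
          * iteratedDeriv j φ 0 := by
    rw [Finset.sum_range_succ', Finset.sum_range_succ]
    rw [if_pos rfl, add_zero, if_pos rfl,
      show ((-1:ℂ)^M * (((M:ℂ)+1) * ((M:ℂ)+2 + ((M:ℂ)+2)*((M:ℂ)-(M:ℂ)-1)) * (0:ℂ))
          * iteratedDeriv M φ 0) = 0 by ring, add_zero]
    refine Finset.sum_congr rfl fun k hk => ?_
    have hkM : k ≠ M := Nat.ne_of_lt (Finset.mem_range.mp hk)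
    rw [if_neg k.succ_ne_zero, Nat.add_sub_cancel, if_neg hkM]
    push_cast [pow_succ]
    ring
  have e2 : (∑ k ∈ Finset.range (M+1),
        α k * (-1:ℂ)^k * ((lam:ℂ) - (M:ℂ) + (2-2*(M:ℂ))*(k:ℂ) + 2*(k:ℂ)*((k:ℂ)-1))
          * iteratedDeriv k φ 0)
      = ∑ j ∈ Finset.range (M+1), (-1:ℂ)^j *
          (((lam:ℂ) + (M:ℂ) + 2 + 2*((j:ℂ)+1)*((j:ℂ)-(M:ℂ)-1)) * α j) * iteratedDeriv j φ 0 :=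
    Finset.sum_congr rfl fun k _ => by ring
  rw [e1, e2, e3, ← Finset.sum_add_distrib, ← Finset.sum_add_distrib]
  exact Finset.sum_congr rfl fun j _ => by ring

lemma itd_testfn (j i : ℕ) :
    iteratedDeriv i (fun v : ℝ => (v:ℂ)^j) 0 = if i = j then (j.factorial : ℂ) else 0 := by
  have h : (fun v : ℝ => (v:ℂ)^j) = fun v : ℝ => (v:ℂ)^j * (fun _ : ℝ => (1:ℂ)) v := by
    funext v; simp
  rw [h, itd_monomial contDiff_const j i, itd_const]
  rcases lt_trichotomy i j with hlt | heq | hgt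
  · rw [Nat.descFactorial_eq_zero_iff_lt.mpr hlt]
    simp [Nat.ne_of_lt hlt]
  · subst heq
    simp [Nat.descFactorial_self]
  · have h1 : i - j ≠ 0 := by omega
    have h2 : i ≠ j := by omega
    simp [h1, h2]


/-- With `σ = -i(M+1)`, the equation `Q_σ(Σ_{k=0}^{M} α_k δ^{(k)}(v)) = 0` is
equivalent to the tridiagonal linear system: for each `k = 0, …, M`,
`(k-1-M)α_{k-1} + (λ+M+2+2(k+1)(k-M-1))α_k + (k+1)(M+2+(k+2)(k-M-1))α_{k+1} = 0`,
with the conventions `α_{-1} = α_{M+1} = 0`. -/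
theorem annihilation_iff_linear_system (M : ℕ) (lam : ℝ) (α : ℕ → ℂ) :
    (∀ φ : ℝ → ℂ, ContDiff ℝ (⊤ : ℕ∞) φ →
      ∑ k ∈ Finset.range (M+1),
        α k * ((-1 : ℂ)^k * iteratedDeriv k (Qt (-Complex.I * ((M:ℂ)+1)) lam φ) 0) = 0)
    ↔
    (∀ k ≤ M,
      ((k : ℂ) - 1 - (M : ℂ)) * (if k = 0 then 0 else α (k-1))
      + ((lam : ℂ) + (M : ℂ) + 2 + 2*((k : ℂ)+1)*((k : ℂ)-(M : ℂ)-1)) * α k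
      + ((k : ℂ)+1) * ((M : ℂ)+2 + ((k : ℂ)+2)*((k : ℂ)-(M : ℂ)-1))
          * (if k = M then 0 else α (k+1)) = 0) := by
  constructor
  · intro h k hk
    have hφ : ContDiff ℝ (⊤ : ℕ∞) (fun v : ℝ => (v:ℂ)^k) := Complex.ofRealCLM.contDiff.pow k
    have hs := h _ hφ
    rw [master M lam α (hφ.of_le (by simp))] at hs
    rw [Finset.sum_eq_single k] at hs
    · rw [itd_testfn k k, if_pos rfl] at hs
      have hne1 : ((-1:ℂ))^k ≠ 0 := pow_ne_zero _ (by norm_num)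
      have hne2 : ((k.factorial : ℕ):ℂ) ≠ 0 := Nat.cast_ne_zero.mpr k.factorial_ne_zero
      have h3 := (mul_eq_zero.mp hs).resolve_right hne2
      exact (mul_eq_zero.mp h3).resolve_left hne1
    · intro b _ hb
      rw [itd_testfn k b, if_neg hb, mul_zero]
    · intro hnk
      exact absurd (Finset.mem_range.mpr (by omega)) hnk
  · intro h φ hφ
    rw [master M lam α (hφ.of_le (by simp))]
    refine Finset.sum_eq_zero fun j hj => ?_
    rw [h j (Nat.lt_succ_iff.mp (Finset.mem_range.mp hj)), mul_zero, zero_mul]
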